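/- arXiv:2511.14177 — 3 statements merged into one kernel-verified Lean document; each statement's English description precedes it below -/
import Mathlib

section
/- For all integers N ≥ 2 and k ≥ 0, the alternating binomial sum ∑_{s=0}^{N} (-1)^s C(N,s) (s+k)!/(N+s+k-1)! equals k!(2N-2)!/((N-2)!(2N+k-1)!). -/
/-! Since `(s + k)! / (s + k + m + 1)! = (1 / m!) ∫₀¹ t^(s+k) (1-t)^m dt` (Euler's Beta
integral), the alternating binomial sum collapses under the integral to
`(1/m!) ∫₀¹ t^k (1-t)^(N+m) dt` by the binomial theorem, which is again a Beta integral.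
The theorem is the case `m = N - 2`. -/

open Finset Nat intervalIntegral

theorem integral_pow_mul_one_sub_pow (m n : ℕ) :
    ∫ x in (0:ℝ)..1, x ^ m * (1 - x) ^ n = (m ! * n ! : ℝ) / (m + n + 1)! := by
  apply Complex.ofReal_injective
  have hbeta := Complex.betaIntegral_eq_Gamma_mul_div (m + 1) (n + 1)
    (by simp only [Complex.add_re, Complex.natCast_re, Complex.one_re]; positivity)
    (by simp only [Complex.add_re, Complex.natCast_re, Complex.one_re]; positivity)
  simp only [Complex.betaIntegral, add_sub_cancel_right] at hbeta
  rw [← integral_ofReal]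
  push_cast
  convert hbeta using 1
  · refine integral_congr fun x _ => ?_
    simp [Complex.cpow_natCast]
  · rw [show (m + 1 + (n + 1) : ℂ) = ((m + n + 1 : ℕ) : ℂ) + 1 by push_cast; ring,
      Complex.Gamma_nat_eq_factorial, Complex.Gamma_nat_eq_factorial,
      Complex.Gamma_nat_eq_factorial]

theorem sum_range_neg_one_pow_mul_choose_mul_pow {R : Type*} [CommRing R] (N : ℕ) (x : R) :
    ∑ s ∈ range (N + 1), (-1) ^ s * (N.choose s : R) * x ^ s = (1 - x) ^ N := by
  rw [show 1 - x = -x + 1 by ring, add_pow]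
  refine sum_congr rfl fun s _ => ?_
  rw [neg_pow]
  ring

theorem sum_range_neg_one_pow_mul_choose_mul_integral (N k m : ℕ) :
    ∑ s ∈ range (N + 1),
        (-1 : ℝ) ^ s * N.choose s * ∫ x in (0:ℝ)..1, x ^ (s + k) * (1 - x) ^ m
      = ∫ x in (0:ℝ)..1, x ^ k * (1 - x) ^ (N + m) := by
  calc
    _ = ∑ s ∈ range (N + 1), ∫ x in (0:ℝ)..1,
          (-1 : ℝ) ^ s * N.choose s * (x ^ (s + k) * (1 - x) ^ m) :=
        sum_congr rfl fun s _ => (integral_const_mul _ _).symm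
    _ = ∫ x in (0:ℝ)..1, ∑ s ∈ range (N + 1),
          (-1 : ℝ) ^ s * N.choose s * (x ^ (s + k) * (1 - x) ^ m) :=
        (integral_finsetSum fun _ _ =>
          (by fun_prop : Continuous _).intervalIntegrable _ _).symm
    _ = _ := by
        refine integral_congr fun x _ => ?_
        rw [pow_add, ← sum_range_neg_one_pow_mul_choose_mul_pow N x, sum_mul, mul_sum]
        refine sum_congr rfl fun s _ => ?_
        ring

theorem sum_range_neg_one_pow_mul_choose_mul_factorial_div (N k m : ℕ) :
    ∑ s ∈ range (N + 1), (-1 : ℝ) ^ s * N.choose s * (s + k)! / (s + k + m + 1)!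
      = (k ! * (N + m)! : ℝ) / (m ! * (k + (N + m) + 1)!) := by
  calc
    _ = (∑ s ∈ range (N + 1),
          (-1 : ℝ) ^ s * N.choose s * ∫ x in (0:ℝ)..1, x ^ (s + k) * (1 - x) ^ m) / m ! := by
        rw [sum_div]
        refine sum_congr rfl fun s _ => ?_
        rw [integral_pow_mul_one_sub_pow]
        field_simp
    _ = _ := by
        rw [sum_range_neg_one_pow_mul_choose_mul_integral, integral_pow_mul_one_sub_pow, div_div]
        ring

/-- For all integers `N ≥ 2` and `k ≥ 0`, the alternating binomial sum
`∑_{s=0}^{N} (-1)^s C(N,s) (s+k)!/(N+s+k-1)!` equals `k!(2N-2)!/((N-2)!(2N+k-1)!)`. -/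
theorem alternating_binomial_factorial_sum (N k : ℕ) (hN : 2 ≤ N) :
    ∑ s ∈ Finset.range (N + 1),
      (-1 : ℝ) ^ s * (N.choose s) * (s + k).factorial / (N + s + k - 1).factorial
    = (k.factorial * (2 * N - 2).factorial : ℝ) /
        ((N - 2).factorial * (2 * N + k - 1).factorial) := by
  convert sum_range_neg_one_pow_mul_choose_mul_factorial_div N k (N - 2) using 5 <;> omega
end

section
/- For integers N ≥ n+1 and z, w ∈ B^n, the integral ∫_{B^n} (1-|τ|²)^{N-n-1} ( (τ_j - z_j)/(1 - z·\overline{τ}) + (w_j - τ_j)/(1 - w·\overline{τ}) )^N dV(τ) equals (w_j - z_j)^N ∫_{B^n} (1-|τ|²)^{N-n-1} (1-|τ_j|²)^N dV(τ), where dV is Lebesgue measure on B^n ⊂ C^n. -/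
open Finset MeasureTheory

/-!
The weight depends on `τ` only through `|τ|²`, so the integral does not change when each
coordinate `τ_k` is multiplied by a unimodular number. Averaging over a circle `u ↦ c(u) • τ` of
such rotations and applying the mean value property to the resulting function of `conj u`, which
is holomorphic on the closed disc, replaces the integrand by its value at `conj u = 0`.

Rotating all coordinates by `u`, the factor `u` of `τ_j` cancels between the two fractions, and at
`conj u = 0` the integrand becomes `(w_j - z_j + τ_j ∑ (z_k - w_k) conj τ_k)^N`. Rotating all
coordinates except `τ_j` then removes every `conj τ_k` with `k ≠ j`, leaving
`(w_j - z_j + (z_j - w_j)|τ_j|²)^N = (w_j - z_j)^N (1 - |τ_j|²)^N`.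
-/

namespace BallCrossRatio

open Metric Real ComplexConjugate

variable {ι : Type*} [Fintype ι]

def unitBall (ι : Type*) [Fintype ι] : Set (ι → ℂ) := {τ | ∑ k, ‖τ k‖ ^ 2 < 1}

def closedUnitBall (ι : Type*) [Fintype ι] : Set (ι → ℂ) := {τ | ∑ k, ‖τ k‖ ^ 2 ≤ 1}

lemma continuous_sum_norm_sq : Continuous fun τ : ι → ℂ => ∑ k, ‖τ k‖ ^ 2 := by
  fun_prop

lemma unitBall_subset_closedUnitBall : unitBall ι ⊆ closedUnitBall ι :=
  Set.ofPred_subset_ofPred.2 fun _ => le_of_lt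

lemma measurableSet_unitBall : MeasurableSet (unitBall ι) :=
  (isOpen_lt continuous_sum_norm_sq continuous_const).measurableSet

lemma isCompact_closedUnitBall : IsCompact (closedUnitBall ι) := by
  refine isCompact_of_isClosed_isBounded (isClosed_le continuous_sum_norm_sq continuous_const)
    ((isBounded_closedBall (x := 0) (r := 1)).subset fun τ hτ => ?_)
  rw [mem_closedBall, dist_zero_right, pi_norm_le_iff_of_nonneg zero_le_one]
  intro k
  have : ‖τ k‖ ^ 2 ≤ 1 :=
    (single_le_sum (f := fun k => ‖τ k‖ ^ 2) (fun _ _ => sq_nonneg _) (mem_univ k)).trans hτ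
  nlinarith [norm_nonneg (τ k)]

lemma norm_sum_mul_conj_lt_one {z τ : ι → ℂ} (hz : ∑ k, ‖z k‖ ^ 2 < 1)
    (hτ : τ ∈ closedUnitBall ι) : ‖∑ k, z k * conj (τ k)‖ < 1 := by
  have h_tri : ‖∑ k, z k * conj (τ k)‖ ≤ ∑ k, ‖z k‖ * ‖τ k‖ :=
    (norm_sum_le _ _).trans_eq (by simp)
  have h_cs := sum_mul_sq_le_sq_mul_sq univ (fun k => ‖z k‖) (fun k => ‖τ k‖)
  have h_nonneg : 0 ≤ ∑ k, ‖z k‖ * ‖τ k‖ := by positivity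
  have hτ' : ∑ k, ‖τ k‖ ^ 2 ≤ 1 := hτ
  nlinarith [sum_nonneg fun k (_ : k ∈ univ) => sq_nonneg ‖z k‖]

lemma one_sub_ne_zero_of_norm_lt_one {s : ℂ} (hs : ‖s‖ < 1) : 1 - s ≠ 0 :=
  sub_ne_zero.2 fun h => by simp [← h] at hs

lemma one_sub_mul_ne_zero {v s : ℂ} (hv : ‖v‖ ≤ 1) (hs : ‖s‖ < 1) : 1 - v * s ≠ 0 :=
  one_sub_ne_zero_of_norm_lt_one <| (norm_mul v s).trans_lt <|
    mul_lt_one_of_nonneg_of_lt_one_right hv (norm_nonneg s) hs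

section Torus

variable (c : ι → Circle)

lemma sum_norm_sq_smul (τ : ι → ℂ) : ∑ k, ‖(c • τ) k‖ ^ 2 = ∑ k, ‖τ k‖ ^ 2 := by
  simp only [Pi.smul_apply', Circle.norm_smul]

lemma measurePreserving_smul : MeasurePreserving (c • · : (ι → ℂ) → ι → ℂ) := by
  have h k : MeasurePreserving (c k • · : ℂ → ℂ) := by
    convert (rotation (c k)).measurePreserving using 1
    ext x
    simp [Circle.smul_def]
  exact volume_preserving_pi h

lemma setIntegral_unitBall_smul (f : (ι → ℂ) → ℂ) :
    ∫ τ in unitBall ι, f (c • τ) = ∫ τ in unitBall ι, f τ := by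
  have h_pre : (c • ·) ⁻¹' unitBall ι = unitBall ι := by
    ext τ
    simp only [Set.mem_preimage, unitBall, Set.mem_ofPred_eq, sum_norm_sq_smul]
  simpa only [h_pre] using (measurePreserving_smul c).setIntegral_preimage_emb
    (measurableEmbedding_const_smul c) f (unitBall ι)

end Torus

theorem setIntegral_unitBall_intervalIntegral_smul {γ : ℝ → ι → Circle} (hγ : Continuous γ)
    {f : (ι → ℂ) → ℂ} (hf : ContinuousOn f (closedUnitBall ι)) {a b : ℝ} (hab : a ≤ b) :
    ∫ τ in unitBall ι, (∫ θ in a..b, f (γ θ • τ)) = (b - a) • ∫ τ in unitBall ι, f τ := by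
  have h_int : Integrable (Function.uncurry fun τ θ => f (γ θ • τ))
      ((volume.restrict (unitBall ι)).prod (volume.restrict (Set.Ioc a b))) := by
    rw [Measure.prod_restrict]
    refine (ContinuousOn.integrableOn_compact
      (isCompact_closedUnitBall.prod isCompact_Icc) ?_).mono_set
        (Set.prod_mono unitBall_subset_closedUnitBall Set.Ioc_subset_Icc_self)
    refine hf.comp (by fun_prop) fun p hp => ?_
    simpa only [closedUnitBall, Set.mem_ofPred_eq, sum_norm_sq_smul] using hp.1
  simp only [intervalIntegral.integral_of_le hab]
  rw [integral_integral_swap h_int]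
  simp only [setIntegral_unitBall_smul, setIntegral_const, Real.volume_real_Ioc_of_le hab]

lemma circleAverage_comp_conj {H : ℂ → ℂ} (hH : DifferentiableOn ℂ H (closedBall 0 1)) :
    circleAverage (fun u => H (conj u)) 0 1 = H 0 := by
  have h_inv : circleAverage (fun u => H (conj u)) 0 1 = circleAverage (fun u => H u⁻¹) 0 1 :=
    circleAverage_congr_sphere fun u hu => by
      rw [abs_one, mem_sphere_zero_iff_norm] at hu
      rw [Complex.inv_def, Complex.normSq_eq_norm_sq, hu]
      simp
  rw [h_inv, circleAverage_zero_one_congr_inv]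
  refine DiffContOnCl.circleAverage (DifferentiableOn.diffContOnCl ?_)
  rwa [abs_one, closure_ball _ one_ne_zero]

theorem setIntegral_unitBall_eq_of_differentiableOn {c : Circle → ι → Circle} (hc : Continuous c)
    {f : (ι → ℂ) → ℂ} (hf : ContinuousOn f (closedUnitBall ι)) (H : (ι → ℂ) → ℂ → ℂ)
    (hH : ∀ τ ∈ unitBall ι, DifferentiableOn ℂ (H τ) (closedBall 0 1))
    (hfH : ∀ τ ∈ unitBall ι, ∀ u : Circle, f (c u • τ) = H τ (conj u)) :
    ∫ τ in unitBall ι, f τ = ∫ τ in unitBall ι, H τ 0 := by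
  have h_avg : ∀ τ ∈ unitBall ι,
      ∫ θ in 0..2 * π, f (c (Circle.exp θ) • τ) = (2 * π) • H τ 0 := by
    intro τ hτ
    rw [← circleAverage_comp_conj (hH τ hτ), circleAverage_def, smul_inv_smul₀ two_pi_pos.ne']
    refine intervalIntegral.integral_congr fun θ _ => ?_
    simp [hfH τ hτ, circleMap, Circle.coe_exp]
  have h := setIntegral_unitBall_intervalIntegral_smul (γ := fun θ => c (Circle.exp θ))
    (by fun_prop) hf two_pi_pos.le
  rw [setIntegral_congr_fun measurableSet_unitBall h_avg, integral_smul, sub_zero] at h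
  exact (smul_right_injective _ two_pi_pos.ne' h).symm

lemma cross_ratio_add_eq_div {u v x a b s t : ℂ} (huv : u * v = 1) (hs : 1 - v * s ≠ 0)
    (ht : 1 - v * t ≠ 0) :
    (u * x - a) / (1 - v * s) + (b - u * x) / (1 - v * t)
      = (b - a + x * (s - t) + v * (a * t - b * s)) / ((1 - v * s) * (1 - v * t)) := by
  rw [div_add_div _ _ hs ht]
  congr 1
  linear_combination x * (s - t) * huv

lemma sum_mul_conj_smul (d τ : ι → ℂ) (u : Circle) :
    ∑ k, d k * conj (u * τ k) = conj (u : ℂ) * ∑ k, d k * conj (τ k) := by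
  simp only [map_mul, mul_sum]
  exact sum_congr rfl fun k _ => by ring

theorem setIntegral_cross_ratio_pow {φ : ℝ → ℝ} (hφ : Continuous φ) (N : ℕ) (j : ι)
    {z w : ι → ℂ} (hz : ∑ k, ‖z k‖ ^ 2 < 1) (hw : ∑ k, ‖w k‖ ^ 2 < 1) :
    ∫ τ in unitBall ι, (φ (∑ k, ‖τ k‖ ^ 2) : ℂ) *
        ((τ j - z j) / (1 - ∑ k, z k * conj (τ k)) + (w j - τ j) / (1 - ∑ k, w k * conj (τ k))) ^ N
      = ∫ τ in unitBall ι, (φ (∑ k, ‖τ k‖ ^ 2) : ℂ) *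
        (w j - z j + τ j * ∑ k, (z k - w k) * conj (τ k)) ^ N := by
  have hs τ (hτ : τ ∈ closedUnitBall ι) : ‖∑ k, z k * conj (τ k)‖ < 1 :=
    norm_sum_mul_conj_lt_one hz hτ
  have ht τ (hτ : τ ∈ closedUnitBall ι) : ‖∑ k, w k * conj (τ k)‖ < 1 :=
    norm_sum_mul_conj_lt_one hw hτ
  have hs₀ : ∀ τ ∈ closedUnitBall ι, 1 - ∑ k, z k * conj (τ k) ≠ 0 := fun τ hτ =>
    one_sub_ne_zero_of_norm_lt_one (hs τ hτ)
  have ht₀ : ∀ τ ∈ closedUnitBall ι, 1 - ∑ k, w k * conj (τ k) ≠ 0 := fun τ hτ =>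
    one_sub_ne_zero_of_norm_lt_one (ht τ hτ)
  refine (setIntegral_unitBall_eq_of_differentiableOn (c := fun u _ => u) (by fun_prop)
    (by fun_prop (disch := assumption))
    (fun τ v => (φ (∑ k, ‖τ k‖ ^ 2) : ℂ) *
      ((w j - z j + τ j * (∑ k, z k * conj (τ k) - ∑ k, w k * conj (τ k)) +
        v * (z j * ∑ k, w k * conj (τ k) - w j * ∑ k, z k * conj (τ k))) /
        ((1 - v * ∑ k, z k * conj (τ k)) * (1 - v * ∑ k, w k * conj (τ k)))) ^ N) ?_ ?_).trans ?_
  · intro τ hτ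
    have hτ' := unitBall_subset_closedUnitBall hτ
    have hden : ∀ v ∈ closedBall (0 : ℂ) 1,
        (1 - v * ∑ k, z k * conj (τ k)) * (1 - v * ∑ k, w k * conj (τ k)) ≠ 0 := fun v hv =>
      mul_ne_zero (one_sub_mul_ne_zero (mem_closedBall_zero_iff.1 hv) (hs τ hτ'))
        (one_sub_mul_ne_zero (mem_closedBall_zero_iff.1 hv) (ht τ hτ'))
    fun_prop (disch := assumption)
  · intro τ hτ u
    have hτ' := unitBall_subset_closedUnitBall hτ
    have hu : ‖conj (u : ℂ)‖ ≤ 1 := by rw [RCLike.norm_conj, Circle.norm_coe]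
    rw [sum_norm_sq_smul]
    simp only [Pi.smul_apply', Circle.smul_def, smul_eq_mul, sum_mul_conj_smul]
    congr 2
    exact cross_ratio_add_eq_div (by rw [Complex.mul_conj', Circle.norm_coe]; simp)
      (one_sub_mul_ne_zero hu (hs τ hτ')) (one_sub_mul_ne_zero hu (ht τ hτ'))
  · refine setIntegral_congr_fun measurableSet_unitBall fun τ _ => ?_
    simp only [zero_mul, add_zero, sub_zero, mul_one, div_one, ← sum_sub_distrib, ← sub_mul]

theorem setIntegral_mul_sum_mul_conj_pow {φ : ℝ → ℝ} (hφ : Continuous φ) (N : ℕ) (j : ι)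
    (a : ℂ) (d : ι → ℂ) :
    ∫ τ in unitBall ι, (φ (∑ k, ‖τ k‖ ^ 2) : ℂ) * (a + τ j * ∑ k, d k * conj (τ k)) ^ N
      = ∫ τ in unitBall ι, (φ (∑ k, ‖τ k‖ ^ 2) : ℂ) * (a + d j * (‖τ j‖ ^ 2 : ℝ)) ^ N := by
  classical
  refine (setIntegral_unitBall_eq_of_differentiableOn
    (c := fun u => Function.update (fun _ => u) j 1) (by fun_prop) (by fun_prop)
    (fun τ v => (φ (∑ k, ‖τ k‖ ^ 2) : ℂ) *
      (a + τ j * (d j * conj (τ j) + v * ∑ k ∈ univ.erase j, d k * conj (τ k))) ^ N)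
    (fun τ _ => by fun_prop) fun τ _ u => ?_).trans ?_
  · have h_sum : ∑ k, d k * conj ((Function.update (fun _ => u) j 1 • τ) k)
        = d j * conj (τ j) + conj (u : ℂ) * ∑ k ∈ univ.erase j, d k * conj (τ k) := by
      rw [← add_sum_erase _ _ (mem_univ j), mul_sum]
      simp only [Pi.smul_apply', Function.update_self, one_smul]
      refine congrArg _ (sum_congr rfl fun k hk => ?_)
      rw [Function.update_of_ne (ne_of_mem_erase hk), Circle.smul_def, smul_eq_mul, map_mul]
      ring
    rw [sum_norm_sq_smul, h_sum, Pi.smul_apply', Function.update_self, one_smul]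
  · refine setIntegral_congr_fun measurableSet_unitBall fun τ _ => ?_
    rw [zero_mul, add_zero, mul_left_comm, Complex.mul_conj, Complex.normSq_eq_norm_sq]

theorem setIntegral_radial_mul_cross_ratio_pow {φ : ℝ → ℝ} (hφ : Continuous φ) (N : ℕ) (j : ι)
    {z w : ι → ℂ} (hz : ∑ k, ‖z k‖ ^ 2 < 1) (hw : ∑ k, ‖w k‖ ^ 2 < 1) :
    ∫ τ in unitBall ι, (φ (∑ k, ‖τ k‖ ^ 2) : ℂ) *
        ((τ j - z j) / (1 - ∑ k, z k * conj (τ k)) + (w j - τ j) / (1 - ∑ k, w k * conj (τ k))) ^ N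
      = (w j - z j) ^ N *
        ∫ τ in unitBall ι, ((φ (∑ k, ‖τ k‖ ^ 2) * (1 - ‖τ j‖ ^ 2) ^ N : ℝ) : ℂ) := by
  rw [setIntegral_cross_ratio_pow hφ N j hz hw, setIntegral_mul_sum_mul_conj_pow hφ N j,
    ← integral_const_mul]
  refine setIntegral_congr_fun measurableSet_unitBall fun τ _ => ?_
  have h_factor : w j - z j + (z j - w j) * ((‖τ j‖ ^ 2 : ℝ) : ℂ)
      = (w j - z j) * ((1 - ‖τ j‖ ^ 2 : ℝ) : ℂ) := by
    push_cast
    ring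
  rw [h_factor, mul_pow]
  push_cast
  ring

end BallCrossRatio

theorem ball_cross_ratio_integral_general (n N : ℕ) (j : Fin n)
    (z w : Fin n → ℂ)
    (hz : ∑ k, ‖z k‖ ^ 2 < 1) (hw : ∑ k, ‖w k‖ ^ 2 < 1) :
    ∫ τ in {τ : Fin n → ℂ | ∑ k, ‖τ k‖ ^ 2 < 1},
      (((1 - ∑ k, ‖τ k‖ ^ 2 : ℝ) ^ (N - n - 1) : ℝ) : ℂ) *
        ((τ j - z j) / (1 - ∑ k, z k * (starRingEnd ℂ) (τ k)) +
          (w j - τ j) / (1 - ∑ k, w k * (starRingEnd ℂ) (τ k))) ^ N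
    = (w j - z j) ^ N *
        ∫ τ in {τ : Fin n → ℂ | ∑ k, ‖τ k‖ ^ 2 < 1},
          ((((1 - ∑ k, ‖τ k‖ ^ 2 : ℝ) ^ (N - n - 1)) * (1 - ‖τ j‖ ^ 2) ^ N : ℝ) : ℂ) :=
  BallCrossRatio.setIntegral_radial_mul_cross_ratio_pow (φ := fun x => (1 - x) ^ (N - n - 1))
    (by fun_prop) N j hz hw

/-- For `N ≥ n+1`, `z, w` in the unit ball `B^n` and a fixed index `j`,
`∫_{B^n} (1-|τ|²)^{N-n-1} ((τⱼ-zⱼ)/(1-z·conj τ) + (wⱼ-τⱼ)/(1-w·conj τ))^N dV(τ)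
  = (wⱼ-zⱼ)^N ∫_{B^n} (1-|τ|²)^{N-n-1} (1-|τⱼ|²)^N dV(τ)`. -/
theorem ball_cross_ratio_integral (n N : ℕ) (hN : n + 1 ≤ N) (j : Fin n)
    (z w : Fin n → ℂ)
    (hz : ∑ k, ‖z k‖ ^ 2 < 1) (hw : ∑ k, ‖w k‖ ^ 2 < 1) :
    ∫ τ in {τ : Fin n → ℂ | ∑ k, ‖τ k‖ ^ 2 < 1},
      (((1 - ∑ k, ‖τ k‖ ^ 2 : ℝ) ^ (N - n - 1) : ℝ) : ℂ) *
        ((τ j - z j) / (1 - ∑ k, z k * (starRingEnd ℂ) (τ k)) +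
          (w j - τ j) / (1 - ∑ k, w k * (starRingEnd ℂ) (τ k))) ^ N
    = (w j - z j) ^ N *
        ∫ τ in {τ : Fin n → ℂ | ∑ k, ‖τ k‖ ^ 2 < 1},
          ((((1 - ∑ k, ‖τ k‖ ^ 2 : ℝ) ^ (N - n - 1)) * (1 - ‖τ j‖ ^ 2) ^ N : ℝ) : ℂ) :=
  ball_cross_ratio_integral_general n N j z w hz hw
end

section
/- For the one-dimensional unit disc (n = 1) and integer N ≥ 2, the function F(z,w) = ∫_{B^1} (1-|τ|²)^{N-2} ( (τ-z)/(1-z\overline{τ}) + (w-τ)/(1-w\overline{τ}) )^N dV(τ) equals (w-z)^N · ∫_{B^1} (1-|τ|²)^{N-2}(1-|τ|²)^N dV(τ) = (w-z)^N ∫_0^1 (1-r)^{2N-2} π dr = (w-z)^N · π/(2N-1). -/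
open MeasureTheory

open Set Metric in
/-- Polar coordinates for an integral over the unit disc. -/
lemma polar_ball {E : Type*} [NormedAddCommGroup E] [NormedSpace ℝ E] (f : ℂ → E) :
    ∫ τ in Metric.ball (0 : ℂ) 1, f τ
      = ∫ p in Set.Ioo (0:ℝ) 1 ×ˢ Set.Ioo (-Real.pi) Real.pi,
          p.1 • f (Complex.polarCoord.symm p) := by
  have hmem : ∀ p : ℝ × ℝ, (Complex.polarCoord.symm p ∈ Metric.ball (0:ℂ) 1) ↔ |p.1| < 1 := by
    intro p
    rw [mem_ball_zero_iff, Complex.norm_polarCoord_symm]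
  have hind : ∀ p : ℝ × ℝ,
      p.1 • Set.indicator (Metric.ball (0:ℂ) 1) f (Complex.polarCoord.symm p)
        = Set.indicator {q : ℝ × ℝ | |q.1| < 1}
            (fun q => q.1 • f (Complex.polarCoord.symm q)) p := by
    intro p
    rcases lt_or_ge |p.1| 1 with h | h
    · rw [Set.indicator_of_mem ((hmem p).mpr h),
        Set.indicator_of_mem (show p ∈ {q : ℝ × ℝ | |q.1| < 1} from h)
          (fun q => q.1 • f (Complex.polarCoord.symm q))]
    · rw [Set.indicator_of_notMem (fun hm => absurd ((hmem p).mp hm) (not_lt.mpr h)),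
        Set.indicator_of_notMem (show p ∉ {q : ℝ × ℝ | |q.1| < 1} from not_lt.mpr h)
          (fun q => q.1 • f (Complex.polarCoord.symm q)), smul_zero]
  have hS : MeasurableSet {q : ℝ × ℝ | |q.1| < 1} :=
    measurableSet_lt (measurable_fst.abs) measurable_const
  have hset : polarCoord.target ∩ {q : ℝ × ℝ | |q.1| < 1}
      = Set.Ioo (0:ℝ) 1 ×ˢ Set.Ioo (-Real.pi) Real.pi := by
    rw [polarCoord_target]
    ext ⟨x, y⟩
    simp only [Set.mem_inter_iff, Set.mem_prod, Set.mem_Ioi, Set.mem_Ioo, Set.mem_setOf_eq]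
    constructor
    · rintro ⟨⟨h0, hθ⟩, h1⟩
      exact ⟨⟨h0, (abs_lt.mp h1).2⟩, hθ⟩
    · rintro ⟨⟨h0, h1⟩, hθ⟩
      exact ⟨⟨h0, hθ⟩, by rw [abs_of_pos h0]; exact h1⟩
  rw [← integral_indicator measurableSet_ball,
    ← Complex.integral_comp_polarCoord_symm (Set.indicator (Metric.ball (0:ℂ) 1) f)]
  simp_rw [hind]
  rw [setIntegral_indicator hS, hset]

lemma symm_continuous : Continuous (fun p : ℝ × ℝ => Complex.polarCoord.symm p) := by
  have : (fun p : ℝ × ℝ => Complex.polarCoord.symm p)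
      = fun p : ℝ × ℝ => (p.1 : ℂ) * (Real.cos p.2 + Real.sin p.2 * Complex.I) := by
    funext p; exact Complex.polarCoord_symm_apply p
  rw [this]; fun_prop

open Set Metric in
/-- Iterated polar coordinates for an integral over the unit disc. -/
lemma ball_integral_eq {E : Type*} [NormedAddCommGroup E] [NormedSpace ℝ E] [CompleteSpace E]
    (f : ℂ → E) (hf : ContinuousOn f (Metric.closedBall 0 1)) :
    ∫ τ in Metric.ball (0 : ℂ) 1, f τ
      = ∫ r in Set.Ioo (0:ℝ) 1, ∫ θ in Set.Ioo (-Real.pi) Real.pi,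
          r • f (Complex.polarCoord.symm (r, θ)) := by
  rw [polar_ball]
  have hmaps : Set.MapsTo (fun p : ℝ × ℝ => Complex.polarCoord.symm p)
      (Set.Icc (0:ℝ) 1 ×ˢ Set.Icc (-Real.pi) Real.pi) (Metric.closedBall (0:ℂ) 1) := by
    rintro ⟨r, θ⟩ ⟨hr, _⟩
    rw [mem_closedBall_zero_iff, Complex.norm_polarCoord_symm]
    simpa [abs_of_nonneg hr.1] using hr.2
  have hcont : ContinuousOn (fun p : ℝ × ℝ => p.1 • f (Complex.polarCoord.symm p))
      (Set.Icc (0:ℝ) 1 ×ˢ Set.Icc (-Real.pi) Real.pi) :=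
    (continuous_fst.continuousOn).smul (hf.comp symm_continuous.continuousOn hmaps)
  have hint : IntegrableOn (fun p : ℝ × ℝ => p.1 • f (Complex.polarCoord.symm p))
      (Set.Ioo (0:ℝ) 1 ×ˢ Set.Ioo (-Real.pi) Real.pi) volume :=
    (hcont.integrableOn_compact (isCompact_Icc.prod isCompact_Icc)).mono_set
      (Set.prod_mono Set.Ioo_subset_Icc_self Set.Ioo_subset_Icc_self)
  rw [Measure.volume_eq_prod] at hint ⊢
  exact setIntegral_prod _ hint

/-- Mean-value property over circles via Cauchy's formula. -/
lemma circle_avg (φ : ℂ → ℂ) (hφd : DifferentiableOn ℂ φ (Metric.ball 0 1))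
    {r : ℝ} (h0 : 0 < r) (h1 : r < 1) :
    ∫ θ in (-Real.pi)..Real.pi, φ (circleMap 0 r θ) = (2 * Real.pi) • φ 0 := by
  have hd : DifferentiableOn ℂ φ (Metric.closedBall 0 r) :=
    hφd.mono (Metric.closedBall_subset_ball h1)
  have key := hd.circleIntegral_sub_inv_smul (Metric.mem_ball_self h0)
  simp only [circleIntegral, deriv_circleMap, sub_zero, smul_eq_mul] at key
  have hne : ∀ θ : ℝ, circleMap 0 r θ ≠ 0 := fun θ => circleMap_ne_center (ne_of_gt h0)
  have heq : ∀ θ : ℝ, circleMap 0 r θ * Complex.I * ((circleMap 0 r θ)⁻¹ * φ (circleMap 0 r θ))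
      = Complex.I * φ (circleMap 0 r θ) := by
    intro θ
    field_simp [hne θ]
  simp_rw [heq] at key
  rw [intervalIntegral.integral_const_mul] at key
  have key2 : ∫ θ in (0:ℝ)..2 * Real.pi, φ (circleMap 0 r θ) = (2 * Real.pi) • φ 0 := by
    apply mul_left_cancel₀ Complex.I_ne_zero
    rw [key, Complex.real_smul]
    push_cast
    ring
  have per : Function.Periodic (fun θ => φ (circleMap 0 r θ)) (2 * Real.pi) :=
    (periodic_circleMap 0 r).comp φ
  have hper := per.intervalIntegral_add_eq (-Real.pi) 0
  rw [zero_add, show -Real.pi + 2 * Real.pi = Real.pi by ring] at hper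
  rw [hper, key2]

/-- The disc integral of a radial function times an antiholomorphic factor. -/
lemma mean_val (c : ℝ → ℝ) (hc : Continuous c) (φ : ℂ → ℂ)
    (hφd : DifferentiableOn ℂ φ (Metric.ball 0 1))
    (hφc : ContinuousOn φ (Metric.closedBall 0 1)) :
    ∫ τ in Metric.ball (0:ℂ) 1, (c ‖τ‖ : ℂ) * φ ((starRingEnd ℂ) τ)
      = φ 0 * ∫ τ in Metric.ball (0:ℂ) 1, (c ‖τ‖ : ℂ) := by
  have hmapsconj : Set.MapsTo (fun τ : ℂ => (starRingEnd ℂ) τ)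
      (Metric.closedBall (0:ℂ) 1) (Metric.closedBall (0:ℂ) 1) := by
    intro τ hτ
    rw [Metric.mem_closedBall, Complex.dist_eq] at hτ ⊢
    simpa using hτ
  have hcont1 : ContinuousOn (fun τ : ℂ => (c ‖τ‖ : ℂ) * φ ((starRingEnd ℂ) τ))
      (Metric.closedBall 0 1) := by
    apply ContinuousOn.mul
    · exact (Complex.continuous_ofReal.comp (hc.comp continuous_norm)).continuousOn
    · exact hφc.comp (Complex.continuous_conj.continuousOn) hmapsconj
  have hcont2 : ContinuousOn (fun τ : ℂ => (c ‖τ‖ : ℂ)) (Metric.closedBall (0:ℂ) 1) :=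
    (Complex.continuous_ofReal.comp (hc.comp continuous_norm)).continuousOn
  rw [ball_integral_eq _ hcont1, ball_integral_eq _ hcont2, ← MeasureTheory.integral_const_mul]
  apply setIntegral_congr_fun measurableSet_Ioo
  intro r hr
  obtain ⟨hr0, hr1⟩ := hr
  have hnorm : ∀ θ : ℝ, ‖Complex.polarCoord.symm (r, θ)‖ = r := by
    intro θ
    rw [Complex.norm_polarCoord_symm]
    exact abs_of_pos hr0
  have hconj : ∀ θ : ℝ, (starRingEnd ℂ) (Complex.polarCoord.symm (r, θ))
      = circleMap 0 r (-θ) := by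
    intro θ
    have hexp : Complex.exp (((-θ : ℝ) : ℂ) * Complex.I)
        = ((Real.cos θ : ℝ) : ℂ) - ((Real.sin θ : ℝ) : ℂ) * Complex.I := by
      rw [Complex.exp_mul_I, Complex.ofReal_neg, Complex.cos_neg, Complex.sin_neg,
        ← Complex.ofReal_cos, ← Complex.ofReal_sin]
      ring
    rw [Complex.polarCoord_symm_apply]
    simp only [circleMap, zero_add, hexp, map_mul, map_add, Complex.conj_ofReal,
      Complex.conj_I]
    ring
  have hmean : ∫ θ in Set.Ioo (-Real.pi) Real.pi, φ (circleMap 0 r (-θ))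
      = (2 * Real.pi) • φ 0 := by
    rw [← integral_Ioc_eq_integral_Ioo,
      ← intervalIntegral.integral_of_le (by linarith [Real.pi_pos] : -Real.pi ≤ Real.pi),
      intervalIntegral.integral_comp_neg (fun θ => φ (circleMap 0 r θ)), neg_neg]
    exact circle_avg φ hφd hr0 hr1
  simp_rw [hnorm, hconj]
  rw [integral_smul, MeasureTheory.integral_const_mul, hmean, setIntegral_const]
  rw [Real.volume_real_Ioo_of_le (by linarith [Real.pi_pos]),
    show Real.pi - -Real.pi = 2 * Real.pi by ring]
  simp only [smul_eq_mul, Complex.real_smul, Complex.ofReal_mul, Complex.ofReal_ofNat]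
  ring

/-- The radial integral over the disc. -/
lemma radial_integral (M : ℕ) :
    ∫ τ in Metric.ball (0:ℂ) 1, (1 - Complex.normSq τ) ^ M = Real.pi / (M + 1) := by
  have hf : ContinuousOn (fun τ : ℂ => (1 - Complex.normSq τ) ^ M)
      (Metric.closedBall 0 1) :=
    ((continuous_const.sub Complex.continuous_normSq).pow M).continuousOn
  rw [ball_integral_eq _ hf]
  have hns : ∀ r θ : ℝ, Complex.normSq (Complex.polarCoord.symm (r, θ)) = r ^ 2 := by
    intro r θ
    rw [← Complex.sq_norm, Complex.norm_polarCoord_symm, sq_abs]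
  simp_rw [hns, setIntegral_const,
    Real.volume_real_Ioo_of_le (by linarith [Real.pi_pos] : -Real.pi ≤ Real.pi),
    show Real.pi - -Real.pi = 2 * Real.pi by ring, smul_eq_mul]
  have hFTC : ∫ x in (0:ℝ)..1, x * (1 - x ^ 2) ^ M = 1 / (2 * ((M:ℝ) + 1)) := by
    have hderiv : ∀ x ∈ Set.uIcc (0:ℝ) 1,
        HasDerivAt (fun t : ℝ => -(1 - t ^ 2) ^ (M + 1) / (2 * (M + 1)))
          (x * (1 - x ^ 2) ^ M) x := by
      intro x _
      have h1 : HasDerivAt (fun t : ℝ => 1 - t ^ 2) (-(2 * x ^ 1)) x :=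
        (hasDerivAt_pow 2 x).const_sub 1
      have h2 := (h1.pow (M + 1)).neg.div_const (2 * (M + 1))
      refine h2.congr_deriv ?_
      have hMne : ((M:ℝ) + 1) ≠ 0 := by positivity
      simp only [Nat.add_sub_cancel, Nat.cast_add, Nat.cast_one, pow_one]
      field_simp
    have hint : IntervalIntegrable (fun x : ℝ => x * (1 - x ^ 2) ^ M) volume 0 1 := by
      apply Continuous.intervalIntegrable; fun_prop
    rw [intervalIntegral.integral_eq_sub_of_hasDerivAt hderiv hint]
    have hMne : ((M:ℝ) + 1) ≠ 0 := by positivity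
    norm_num
    field_simp
  have h01 : ∫ x in Set.Ioo (0:ℝ) 1, x * (1 - x ^ 2) ^ M = 1 / (2 * ((M:ℝ) + 1)) := by
    rw [← integral_Ioc_eq_integral_Ioo,
      ← intervalIntegral.integral_of_le (by norm_num : (0:ℝ) ≤ 1)]
    exact hFTC
  rw [MeasureTheory.integral_const_mul, h01]
  have hMne : ((M:ℝ) + 1) ≠ 0 := by positivity
  field_simp

/-- In the unit disc (`n = 1`), for `N ≥ 2` and `z, w` in the disc,
`∫_{B¹} (1-|τ|²)^{N-2} ((τ-z)/(1-z conj τ) + (w-τ)/(1-w conj τ))^N dV(τ)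
  = (w-z)^N ∫_{B¹} (1-|τ|²)^{2N-2} dV(τ)`, and this radial integral equals `π/(2N-1)`. -/
theorem disc_cross_ratio_integral (N : ℕ) (hN : 2 ≤ N) (z w : ℂ)
    (hz : ‖z‖ < 1) (hw : ‖w‖ < 1) :
    (∫ τ in Metric.ball (0 : ℂ) 1,
        (((1 - Complex.normSq τ) ^ (N - 2) : ℝ) : ℂ) *
          ((τ - z) / (1 - z * (starRingEnd ℂ) τ) +
            (w - τ) / (1 - w * (starRingEnd ℂ) τ)) ^ N)
      = (w - z) ^ N *
          ((∫ τ in Metric.ball (0 : ℂ) 1, (1 - Complex.normSq τ) ^ (2 * N - 2) : ℝ) : ℂ)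
    ∧ (∫ τ in Metric.ball (0 : ℂ) 1, (1 - Complex.normSq τ) ^ (2 * N - 2))
      = Real.pi / (2 * N - 1) := by
  have hpart2 : (∫ τ in Metric.ball (0 : ℂ) 1, (1 - Complex.normSq τ) ^ (2 * N - 2))
      = Real.pi / (2 * N - 1) := by
    rw [radial_integral (2 * N - 2)]
    congr 1
    have h2N : ((2 * N - 2 : ℕ) : ℝ) = 2 * N - 2 := by
      have h : (2:ℕ) ≤ 2 * N := by omega
      push_cast [Nat.cast_sub h]
      ring
    rw [h2N]; ring
  refine ⟨?_, hpart2⟩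
  set H : ℂ → ℂ := fun u => (((1 - z * u) * (1 - w * u))⁻¹) ^ N with hH
  set c : ℝ → ℝ := fun t => (1 - t ^ 2) ^ (2 * N - 2) with hcdef
  have hden : ∀ u : ℂ, ‖u‖ ≤ 1 → 1 - z * u ≠ 0 ∧ 1 - w * u ≠ 0 := by
    intro u hu
    constructor <;>
    · intro h
      have h2 := sub_eq_zero.mp h
      first
        | (have h3 : ‖z * u‖ < 1 := by
            rw [norm_mul]
            calc ‖z‖ * ‖u‖ ≤ ‖z‖ * 1 := mul_le_mul_of_nonneg_left hu (norm_nonneg z)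
              _ < 1 := by simpa using hz
           rw [← h2] at h3; simp at h3)
        | (have h3 : ‖w * u‖ < 1 := by
            rw [norm_mul]
            calc ‖w‖ * ‖u‖ ≤ ‖w‖ * 1 := mul_le_mul_of_nonneg_left hu (norm_nonneg w)
              _ < 1 := by simpa using hw
           rw [← h2] at h3; simp at h3)
  have hHdiff : DifferentiableOn ℂ H (Metric.closedBall 0 1) := by
    apply DifferentiableOn.pow
    apply DifferentiableOn.inv
    · apply DifferentiableOn.mul
      · exact ((differentiable_const (1:ℂ)).sub (differentiable_id.const_mul z)).differentiableOn
      · exact ((differentiable_const (1:ℂ)).sub (differentiable_id.const_mul w)).differentiableOn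
    · intro u hu
      have h := hden u (mem_closedBall_zero_iff.mp hu)
      exact mul_ne_zero h.1 h.2
  have hc : Continuous c := by fun_prop
  have hpt : ∀ τ ∈ Metric.ball (0:ℂ) 1,
      (((1 - Complex.normSq τ) ^ (N - 2) : ℝ) : ℂ) *
          ((τ - z) / (1 - z * (starRingEnd ℂ) τ) +
            (w - τ) / (1 - w * (starRingEnd ℂ) τ)) ^ N
        = (w - z) ^ N * ((c ‖τ‖ : ℂ) * H ((starRingEnd ℂ) τ)) := by
    intro τ hτ
    have hτ1 : ‖(starRingEnd ℂ) τ‖ ≤ 1 := by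
      rw [show (starRingEnd ℂ) τ = star τ from rfl, norm_star]
      exact (mem_ball_zero_iff.mp hτ).le
    obtain ⟨ha, hb⟩ := hden ((starRingEnd ℂ) τ) hτ1
    have hsum : (τ - z) / (1 - z * (starRingEnd ℂ) τ) + (w - τ) / (1 - w * (starRingEnd ℂ) τ)
        = (w - z) * ((1 - Complex.normSq τ : ℝ) : ℂ)
          * ((1 - z * (starRingEnd ℂ) τ) * (1 - w * (starRingEnd ℂ) τ))⁻¹ := by
      rw [div_add_div _ _ ha hb, div_eq_mul_inv]
      congr 1
      rw [Complex.ofReal_sub, Complex.ofReal_one, ← Complex.mul_conj]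
      ring
    have hcnorm : (c ‖τ‖ : ℝ) = (1 - Complex.normSq τ) ^ (2 * N - 2) := by
      rw [hcdef]
      simp only
      rw [Complex.sq_norm]
    rw [hsum, hcnorm, hH]
    simp only
    rw [mul_pow, mul_pow]
    have hexp : (N - 2) + N = 2 * N - 2 := by omega
    push_cast
    rw [← hexp, pow_add]
    ring
  calc (∫ τ in Metric.ball (0 : ℂ) 1,
        (((1 - Complex.normSq τ) ^ (N - 2) : ℝ) : ℂ) *
          ((τ - z) / (1 - z * (starRingEnd ℂ) τ) +
            (w - τ) / (1 - w * (starRingEnd ℂ) τ)) ^ N)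
      = ∫ τ in Metric.ball (0 : ℂ) 1,
          (w - z) ^ N * ((c ‖τ‖ : ℂ) * H ((starRingEnd ℂ) τ)) :=
        setIntegral_congr_fun measurableSet_ball hpt
    _ = (w - z) ^ N * ∫ τ in Metric.ball (0 : ℂ) 1, (c ‖τ‖ : ℂ) * H ((starRingEnd ℂ) τ) :=
        MeasureTheory.integral_const_mul _ _
    _ = (w - z) ^ N * (H 0 * ∫ τ in Metric.ball (0 : ℂ) 1, (c ‖τ‖ : ℂ)) := by
        rw [mean_val c hc H (hHdiff.mono Metric.ball_subset_closedBall) hHdiff.continuousOn]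
    _ = (w - z) ^ N * ∫ τ in Metric.ball (0 : ℂ) 1, (c ‖τ‖ : ℂ) := by
        have h1 : H 0 = 1 := by simp [hH]
        rw [h1, one_mul]
    _ = (w - z) ^ N *
          ((∫ τ in Metric.ball (0 : ℂ) 1, (1 - Complex.normSq τ) ^ (2 * N - 2) : ℝ) : ℂ) := by
        have hcint : IntegrableOn (fun τ : ℂ => c ‖τ‖) (Metric.ball (0:ℂ) 1) volume :=
          (((hc.comp continuous_norm).continuousOn).integrableOn_compact
            (isCompact_closedBall (0:ℂ) 1)).mono_set Metric.ball_subset_closedBall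
        have hoc := ContinuousLinearMap.integral_comp_comm Complex.ofRealCLM hcint
        simp only [Complex.ofRealCLM_apply] at hoc
        rw [hoc]
        congr 2
        apply setIntegral_congr_fun measurableSet_ball
        intro τ _
        rw [hcdef]
        simp only [Complex.sq_norm]
end
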